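/- The Fourier coefficients of log|T'_{α,β}| on [-1,1] are 𝓕[0] = log(α(1+β)) - (α-1) and, for j ≠ 0, 𝓕[j] = -((α-1)/(|j|π)) ∫_0^{|j|π} (sin x)/x dx. -/

import Mathlib

/-!
Since `log |x|` is even, the coefficient reduces to the cosine integral
`∫₀¹ (c + k log x) cos (jπx) dx` with `c = log (α(1+β))`, `k = α - 1`. For `j = 0` this is `c + k ∫₀¹ log = c - k`. For `j ≠ 0` the
constant contributes nothing, and with `a = |j|π` the function
`log x · sin (ax) / a - (1/a) ∫₀^{ax} sinc` is continuous on `[0, 1]` (near `0` it is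
`x log x · sinc (ax)` plus a continuous term) with derivative `log x · cos (ax)` on `(0, 1)`, so the
fundamental theorem of calculus gives `∫₀¹ log x cos (ax) dx = -(1/a) ∫₀^a sin u / u du`.
-/

open Real MeasureTheory

/-- Fourier coefficient on `[-1,1]` of a real-valued function. -/
noncomputable def Fc (f : ℝ → ℝ) (j : ℤ) : ℂ :=
  (1 / 2) * ∫ x in Set.Icc (-1 : ℝ) 1, (f x : ℂ) * Complex.exp (-(j * π * Complex.I * x))

open Set
open scoped Interval

theorem intervalIntegral.integral_neg_to_self_eq_integral_add_comp_neg {E : Type*}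
    [NormedAddCommGroup E] [NormedSpace ℝ E] {f : ℝ → E} {a : ℝ}
    (hf : IntervalIntegrable f volume (-a) a) :
    ∫ x in -a..a, f x = ∫ x in 0..a, (f x + f (-x)) := by
  have h0 : (0 : ℝ) ∈ [[-a, a]] := by
    rcases le_total 0 a with h | h <;> simp [h]
  have hleft : IntervalIntegrable f volume (-a) 0 :=
    hf.mono_set (uIcc_subset_uIcc left_mem_uIcc h0)
  have hright : IntervalIntegrable f volume 0 a :=
    hf.mono_set (uIcc_subset_uIcc h0 right_mem_uIcc)
  have hneg : IntervalIntegrable (fun x ↦ f (-x)) volume 0 a := by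
    simpa using (IntervalIntegrable.iff_comp_neg (by finiteness)).mp hleft.symm
  rw [intervalIntegral.integral_add hright hneg, intervalIntegral.integral_comp_neg, neg_zero,
    add_comm, intervalIntegral.integral_add_adjacent_intervals hleft hright]

theorem intervalIntegral.integral_sinc (a b : ℝ) :
    ∫ u in a..b, sinc u = ∫ u in a..b, sin u / u := by
  refine intervalIntegral.integral_congr_ae ?_
  filter_upwards [Measure.ae_ne volume 0] with u hu _ using sinc_of_ne_zero hu

theorem Fc_eq_integral_mul_cos_of_even {f : ℝ → ℝ} (hf_even : ∀ x, f (-x) = f x)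
    (hf : IntervalIntegrable f volume (-1) 1) (j : ℤ) :
    Fc f j = ((∫ x in 0..1, f x * cos (j * π * x) : ℝ) : ℂ) := by
  have hf' : IntervalIntegrable (fun x ↦ (f x : ℂ)) volume (-1) 1 := ⟨hf.1.ofReal, hf.2.ofReal⟩
  have hg : IntervalIntegrable
      (fun x : ℝ ↦ (f x : ℂ) * Complex.exp (-(j * π * Complex.I * x))) volume (-1) 1 :=
    hf'.mul_continuousOn (by fun_prop)
  rw [Fc, integral_Icc_eq_integral_Ioc, ← intervalIntegral.integral_of_le (by norm_num),
    intervalIntegral.integral_neg_to_self_eq_integral_add_comp_neg hg,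
    ← intervalIntegral.integral_ofReal, ← intervalIntegral.integral_const_mul]
  refine intervalIntegral.integral_congr fun x _ ↦ ?_
  simp only [hf_even]
  push_cast
  rw [Complex.cos]
  ring_nf

theorem integral_log_mul_cos {a : ℝ} (ha : a ≠ 0) :
    ∫ x in (0 : ℝ)..1, log x * cos (a * x) = -(1 / a) * ∫ u in (0 : ℝ)..a, sin u / u := by
  set F : ℝ → ℝ := fun x ↦ log x * sin (a * x) / a - (∫ u in (0 : ℝ)..a * x, sinc u) / a
  have hF_cont : Continuous F := by
    have hF : F = fun x ↦ x * log x * sinc (a * x) - (∫ u in (0 : ℝ)..a * x, sinc u) / a := by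
      funext x
      rcases eq_or_ne x 0 with rfl | hx
      · simp [F]
      · simp only [F, sinc_of_ne_zero (mul_ne_zero ha hx)]
        field_simp
    have := intervalIntegral.differentiable_integral_of_continuous (a := 0) continuous_sinc
    rw [hF]
    fun_prop
  have hF_deriv : ∀ x ∈ Ioo (0 : ℝ) 1, HasDerivAt F (log x * cos (a * x)) x := by
    intro x hx
    have hSi := (continuous_sinc.integral_hasStrictDerivAt 0 (a * x)).hasDerivAt.comp x
      ((hasDerivAt_id x).const_mul a)
    refine ((((hasDerivAt_log hx.1.ne').mul ((hasDerivAt_id x).const_mul a).sin).div_const a).sub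
      (hSi.div_const a)).congr_deriv ?_
    simp only [id, mul_one, sinc_of_ne_zero (mul_ne_zero ha hx.1.ne')]
    field_simp
    ring
  have hint : IntervalIntegrable (fun x ↦ log x * cos (a * x)) volume 0 1 :=
    intervalIntegral.intervalIntegrable_log'.mul_continuousOn (by fun_prop)
  rw [intervalIntegral.integral_eq_sub_of_hasDerivAt_of_le zero_le_one hF_cont.continuousOn
    hF_deriv hint, ← intervalIntegral.integral_sinc]
  simp [F]
  ring

theorem integral_cos_int_mul_pi_mul {j : ℤ} (hj : j ≠ 0) :
    ∫ x in (0 : ℝ)..1, cos (j * π * x) = 0 := by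
  have hjπ : (j * π : ℝ) ≠ 0 := mul_ne_zero (Int.cast_ne_zero.mpr hj) pi_ne_zero
  simp [intervalIntegral.integral_comp_mul_left (fun x ↦ cos x) hjπ, sin_int_mul_pi]

theorem fourier_coeffs_of_log_deriv_general (α β : ℝ) :
    Fc (fun x => Real.log (α * (1 + β)) + (α - 1) * Real.log |x|) 0 =
      ((Real.log (α * (1 + β)) - (α - 1) : ℝ) : ℂ) ∧
    ∀ j : ℤ, j ≠ 0 →
      Fc (fun x => Real.log (α * (1 + β)) + (α - 1) * Real.log |x|) j =
        ((-((α - 1) / (|(j : ℝ)| * π)) * ∫ x in (0 : ℝ)..(|(j : ℝ)| * π),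
            Real.sin x / x : ℝ) : ℂ) := by
  set c := log (α * (1 + β))
  set k := α - 1
  have hFc (j : ℤ) : Fc (fun x ↦ c + k * log |x|) j =
      ((c * ∫ x in (0 : ℝ)..1, cos (j * π * x)) +
        k * ∫ x in (0 : ℝ)..1, log x * cos (j * π * x) : ℝ) := by
    have hf : IntervalIntegrable (fun x ↦ c + k * log |x|) volume (-1) 1 := by
      simpa only [log_abs] using
        intervalIntegrable_const.add (intervalIntegral.intervalIntegrable_log'.const_mul k)
    rw [Fc_eq_integral_mul_cos_of_even (by simp) hf, ← intervalIntegral.integral_const_mul,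
      ← intervalIntegral.integral_const_mul, ← intervalIntegral.integral_add
        (Continuous.intervalIntegrable (by fun_prop) _ _)
        ((intervalIntegral.intervalIntegrable_log'.mul_continuousOn (by fun_prop)).const_mul k)]
    simp only [log_abs, add_mul, mul_assoc]
  refine ⟨?_, fun j hj ↦ ?_⟩
  · rw [hFc]
    simp [integral_log]
    ring
  · have hcos (x : ℝ) : cos (j * π * x) = cos (|(j : ℝ)| * π * x) := by
      rcases abs_choice (j : ℝ) with h | h <;> simp [h, neg_mul]
    have ha : |(j : ℝ)| * π ≠ 0 := by positivity
    rw [hFc, integral_cos_int_mul_pi_mul hj]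
    simp only [hcos, integral_log_mul_cos ha]
    push_cast
    ring

theorem fourier_coeffs_of_log_deriv (α β : ℝ) (hα : 1 ≤ α) (hβ : β ∈ Set.Ioc (-1 : ℝ) 1) :
    Fc (fun x => Real.log (α * (1 + β)) + (α - 1) * Real.log |x|) 0 =
      ((Real.log (α * (1 + β)) - (α - 1) : ℝ) : ℂ) ∧
    ∀ j : ℤ, j ≠ 0 →
      Fc (fun x => Real.log (α * (1 + β)) + (α - 1) * Real.log |x|) j =
        ((-((α - 1) / (|(j : ℝ)| * π)) * ∫ x in (0 : ℝ)..(|(j : ℝ)| * π),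
            Real.sin x / x : ℝ) : ℂ) :=
  fourier_coeffs_of_log_deriv_general α β
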